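/- Let r ≥ 2 be an integer, R > 0, let d be the homogeneous quasi-distance on 𝔽_{r2} with d(p,q) := inf{λ > 0 : ‖δ_{1/λ}(p⁻¹·q)‖ ≤ R}, and let a' = 1.9. There exists δ > 0 such that for all p, q ∈ 𝔽_{r2} with v_p, v_q, w_p, w_q nonzero satisfying R·‖w_p‖ > a'·‖v_p‖², R·‖w_q‖ > a'·‖v_q‖², ∠(v_p,v_q) < δ and ∠(w_p,w_q) < δ, one has d(p,q) ≤ d(0,p) or d(p,q) ≤ d(0,q). -/

import Mathlib

namespace Fr2

/-- Index set for the second-layer coordinates: pairs `i < j`. -/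
abbrev UT (r : ℕ) := {ij : Fin r × Fin r // ij.1 < ij.2}

/-- Carrier of `𝔽_{r2}`: `p = (v_p, w_p)` with `v_p ∈ ℝ^r` and `w_p ∈ ℝ^{r(r-1)/2}`. -/
abbrev G (r : ℕ) := (Fin r → ℝ) × (UT r → ℝ)

/-- Group law of `𝔽_{r2}`. -/
noncomputable def mul {r : ℕ} (p q : G r) : G r :=
  (fun i => p.1 i + q.1 i,
   fun ij => p.2 ij + q.2 ij +
     (p.1 ij.1.1 * q.1 ij.1.2 - q.1 ij.1.1 * p.1 ij.1.2) / 2)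

/-- Group inverse of `𝔽_{r2}`. -/
noncomputable def inv {r : ℕ} (p : G r) : G r := (fun i => -p.1 i, fun ij => -p.2 ij)

/-- Dilation of factor `l`. -/
noncomputable def dil {r : ℕ} (l : ℝ) (p : G r) : G r := (fun i => l * p.1 i, fun ij => l ^ 2 * p.2 ij)

/-- Square of the Euclidean norm. -/
noncomputable def normSq {r : ℕ} (p : G r) : ℝ := (∑ i, (p.1 i) ^ 2) + ∑ ij, (p.2 ij) ^ 2

/-- The homogeneous quasi-distance whose unit ball centered at the identity is the
Euclidean ball of radius `R`. -/
noncomputable def dist (R : ℝ) {r : ℕ} (p q : G r) : ℝ :=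
  sInf {l : ℝ | 0 < l ∧ normSq (dil (1 / l) (mul (inv p) q)) ≤ R ^ 2}

end Fr2

/-- Euclidean scalar product on `ι → ℝ`. -/
def innerF {ι : Type*} [Fintype ι] (u v : ι → ℝ) : ℝ := ∑ i, u i * v i

/-- Euclidean norm on `ι → ℝ`. -/
noncomputable def normF {ι : Type*} [Fintype ι] (u : ι → ℝ) : ℝ :=
  Real.sqrt (innerF u u)

/-- The (non-oriented) Euclidean angle between two vectors, in `[0, π]`, characterized by
`cos ∠(u,v) = ⟨u,v⟩ / (‖u‖·‖v‖)`. -/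
noncomputable def angleF {ι : Type*} [Fintype ι] (u v : ι → ℝ) : ℝ :=
  Real.arccos (innerF u v / (normF u * normF v))

/-!
Write `A, B` for `‖v_p‖, ‖v_q‖` and `a, b` for `‖w_p‖, ‖w_q‖`, and assume `d(0,p) ≤ d(0,q) = l`,
where `l` is the positive root of `R²l⁴ = B²l² + b²`. Since
`p⁻¹q = (v_q - v_p, w_q - w_p - v_p ∧ v_q / 2)`, the claim `d(p,q) ≤ l` reads
`‖v_q - v_p‖²l² + ‖w_q - w_p - v_p ∧ v_q / 2‖² ≤ B²l² + b²`. For small angles the left side is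
`A²l² + a² + B²l² + b² - 2(ABl² + ab)` up to errors `O(δ)·ABl²`, so it suffices that
`A²l² + a² < 2ab`. The parabolic condition gives `Rl² ≤ 1.31 b`, hence `A²l² ≤ 0.69 ab` and
`a ≤ 1.3 b`; since `0.69 + 1.3 < 2`, this is where `a' = 1.9` enters.
-/

section Euclidean

open InnerProductGeometry RealInnerProductSpace

variable {ι : Type*} [Fintype ι]

lemma normF_nonneg (u : ι → ℝ) : 0 ≤ normF u := Real.sqrt_nonneg _

lemma normF_sq (u : ι → ℝ) : normF u ^ 2 = ∑ i, u i ^ 2 := by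
  rw [normF, innerF, Real.sq_sqrt (Finset.sum_nonneg fun i _ => mul_self_nonneg _)]
  simp only [sq]

lemma innerF_comm (u v : ι → ℝ) : innerF u v = innerF v u := by
  simp only [innerF, mul_comm]

lemma innerF_eq_inner (u v : ι → ℝ) :
    innerF u v = ⟪WithLp.toLp 2 u, WithLp.toLp 2 v⟫ := by
  simp [innerF, PiLp.inner_apply, mul_comm]

lemma normF_eq_norm (u : ι → ℝ) : normF u = ‖WithLp.toLp 2 u‖ := by
  rw [normF, innerF_eq_inner, real_inner_self_eq_norm_sq, Real.sqrt_sq (norm_nonneg _)]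

lemma angleF_eq_angle (u v : ι → ℝ) :
    angleF u v = angle (WithLp.toLp 2 u) (WithLp.toLp 2 v) := by
  rw [angleF, angle, innerF_eq_inner, normF_eq_norm, normF_eq_norm]

lemma normF_sub_le (u v : ι → ℝ) : normF (u - v) ≤ normF u + normF v := by
  simpa only [normF_eq_norm, WithLp.toLp_sub] using norm_sub_le _ _

lemma normF_sub_sq (u v : ι → ℝ) :
    normF (u - v) ^ 2 = normF u ^ 2 - 2 * innerF u v + normF v ^ 2 := by
  simpa only [normF_eq_norm, innerF_eq_inner, WithLp.toLp_sub] using norm_sub_sq_real _ _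

lemma innerF_eq_mul_cos (u v : ι → ℝ) :
    innerF u v = normF u * normF v * Real.cos (angleF u v) := by
  rw [innerF_eq_inner, normF_eq_norm, normF_eq_norm, angleF_eq_angle,
    ← cos_angle_mul_norm_mul_norm]
  ring

lemma angleF_comm (u v : ι → ℝ) : angleF u v = angleF v u := by
  rw [angleF_eq_angle, angleF_eq_angle, angle_comm]

lemma normF_pos {u : ι → ℝ} (hu : u ≠ 0) : 0 < normF u := by
  rw [normF_eq_norm, norm_pos_iff]
  simpa using hu

lemma mul_one_sub_sq_div_two_le_innerF {u v : ι → ℝ} {δ : ℝ} (hδ : δ ≤ Real.pi)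
    (h : angleF u v ≤ δ) : normF u * normF v * (1 - δ ^ 2 / 2) ≤ innerF u v := by
  rw [innerF_eq_mul_cos]
  have hcos : 1 - δ ^ 2 / 2 ≤ Real.cos (angleF u v) :=
    (Real.one_sub_sq_div_two_le_cos).trans
      (Real.cos_le_cos_of_nonneg_of_le_pi (Real.arccos_nonneg _) hδ h)
  exact mul_le_mul_of_nonneg_left hcos (mul_nonneg (normF_nonneg u) (normF_nonneg v))

lemma normF_smul (t : ℝ) (u : ι → ℝ) : normF (t • u) = |t| * normF u := by
  rw [normF_eq_norm, normF_eq_norm, WithLp.toLp_smul, norm_smul, Real.norm_eq_abs]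

end Euclidean

/-- `quarticRoot R V W ^ 2` is the nonnegative root of `R²t² - Vt - W`. -/
noncomputable def quarticRoot (R V W : ℝ) : ℝ :=
  Real.sqrt ((V + Real.sqrt (V ^ 2 + 4 * R ^ 2 * W)) / (2 * R ^ 2))

section quarticRoot

variable {R V W : ℝ}

lemma quarticRoot_nonneg : 0 ≤ quarticRoot R V W := Real.sqrt_nonneg _

lemma abs_le_sqrt_discr (R V : ℝ) (hW : 0 ≤ W) : |V| ≤ Real.sqrt (V ^ 2 + 4 * R ^ 2 * W) :=
  Real.abs_le_sqrt (le_add_of_nonneg_right (mul_nonneg (by positivity) hW))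

lemma quarticRoot_sq (hR : R ≠ 0) (hW : 0 ≤ W) :
    quarticRoot R V W ^ 2 = (V + Real.sqrt (V ^ 2 + 4 * R ^ 2 * W)) / (2 * R ^ 2) :=
  Real.sq_sqrt (div_nonneg (by linarith [neg_abs_le V, abs_le_sqrt_discr R V hW])
    (by positivity))

lemma quarticRoot_spec (hR : R ≠ 0) (hW : 0 ≤ W) :
    R ^ 2 * quarticRoot R V W ^ 4 = V * quarticRoot R V W ^ 2 + W := by
  have hD := Real.sq_sqrt (add_nonneg (sq_nonneg V) (mul_nonneg (by positivity) hW) :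
    0 ≤ V ^ 2 + 4 * R ^ 2 * W)
  rw [show quarticRoot R V W ^ 4 = (quarticRoot R V W ^ 2) ^ 2 by ring, quarticRoot_sq hR hW]
  set D := Real.sqrt (V ^ 2 + 4 * R ^ 2 * W)
  field_simp
  linear_combination hD

lemma le_mul_quarticRoot_sq (hR : R ≠ 0) (hW : 0 ≤ W) : V ≤ R ^ 2 * quarticRoot R V W ^ 2 := by
  rw [quarticRoot_sq hR hW, mul_div_assoc', le_div_iff₀ (by positivity)]
  nlinarith [le_abs_self V, abs_le_sqrt_discr R V hW, sq_nonneg R]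

lemma quarticRoot_pos (hR : R ≠ 0) (hW : 0 < W) : 0 < quarticRoot R V W := by
  refine quarticRoot_nonneg.lt_of_ne fun h => hW.ne' ?_
  simpa [← h, hR, eq_comm] using quarticRoot_spec (V := V) hR hW.le

lemma quarticRoot_le_iff (hR : R ≠ 0) (hW : 0 ≤ W) {l : ℝ} (hl : 0 < l) :
    quarticRoot R V W ≤ l ↔ V * l ^ 2 + W ≤ R ^ 2 * l ^ 4 := by
  set L := quarticRoot R V W
  have hfactor : R ^ 2 * l ^ 4 - (V * l ^ 2 + W)
      = (l ^ 2 - L ^ 2) * (R ^ 2 * (l ^ 2 + L ^ 2) - V) := by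
    linear_combination quarticRoot_spec (V := V) hR hW
  have hpos : 0 < R ^ 2 * (l ^ 2 + L ^ 2) - V := by
    have := le_mul_quarticRoot_sq (V := V) hR hW
    have : 0 < R ^ 2 * l ^ 2 := by positivity
    linarith
  rw [← sub_nonneg (b := V * l ^ 2 + W), hfactor, mul_nonneg_iff_of_pos_right hpos, sub_nonneg,
    pow_le_pow_iff_left₀ quarticRoot_nonneg hl.le two_ne_zero]

end quarticRoot

lemma sInf_setOf_pos_and_le {L : ℝ} (hL : 0 ≤ L) : sInf {l : ℝ | 0 < l ∧ L ≤ l} = L := by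
  rcases hL.eq_or_lt with rfl | hL
  · have : {l : ℝ | 0 < l ∧ 0 ≤ l} = Set.Ioi 0 := Set.ext fun l => ⟨And.left, fun h => ⟨h, h.le⟩⟩
    rw [this, csInf_Ioi]
  · have : {l : ℝ | 0 < l ∧ L ≤ l} = Set.Ici L :=
      Set.ext fun l => ⟨And.right, fun h => ⟨hL.trans_le h, h⟩⟩
    rw [this, csInf_Ici]

lemma radius_bounds_of_parabolic {B b l R : ℝ} (hb : 0 ≤ b) (hR : 0 < R) (hl : 0 < l)
    (hq : R ^ 2 * l ^ 4 = B ^ 2 * l ^ 2 + b ^ 2) (hqP : 1.9 * B ^ 2 ≤ R * b) :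
    b ≤ R * l ^ 2 ∧ 100 * (R * l ^ 2) ≤ 131 * b := by
  have hx : 0 < R * l ^ 2 := by positivity
  constructor
  · nlinarith [sq_nonneg (B * l)]
  · nlinarith [mul_le_mul_of_nonneg_right hqP (sq_nonneg l)]

lemma horizontal_bound_of_parabolic {A a b l R : ℝ} (ha : 0 ≤ a)
    (hpP : 1.9 * A ^ 2 ≤ R * a) (hRl : 100 * (R * l ^ 2) ≤ 131 * b) :
    190 * (A ^ 2 * l ^ 2) ≤ 131 * (a * b) := by
  nlinarith [mul_le_mul_of_nonneg_right hpP (sq_nonneg l), mul_le_mul_of_nonneg_left hRl ha]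

lemma mul_le_of_sq_mul_sq_le {A l X : ℝ} (hA : 0 ≤ A) (hl : 0 ≤ l) (hX : 0 ≤ X)
    (h : A ^ 2 * l ^ 2 ≤ X ^ 2) : A * l ≤ X :=
  (pow_le_pow_iff_left₀ (by positivity) hX two_ne_zero).1 (by rwa [mul_pow])

lemma parabolic_ball_estimate {A B a b l R δ I W C : ℝ} (hA : 0 ≤ A) (hB : 0 ≤ B) (ha : 0 ≤ a)
    (hb : 0 ≤ b) (hR : 0 < R) (hl : 0 < l) (hδ0 : 0 ≤ δ) (hδ : δ ≤ 1 / 100)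
    (hRδ : R * δ ≤ 1 / 100)
    (hq : R ^ 2 * l ^ 4 = B ^ 2 * l ^ 2 + b ^ 2) (hp : A ^ 2 * l ^ 2 + a ^ 2 ≤ R ^ 2 * l ^ 4)
    (hpP : 1.9 * A ^ 2 ≤ R * a) (hqP : 1.9 * B ^ 2 ≤ R * b)
    (hI : A * B * (1 - δ ^ 2 / 2) ≤ I)
    (hW : W ^ 2 ≤ a ^ 2 + b ^ 2 - 2 * (a * b * (1 - δ ^ 2 / 2)))
    (hC0 : 0 ≤ C) (hC : C ≤ A * B * δ) :
    (A ^ 2 + B ^ 2 - 2 * I) * l ^ 2 + (W + C) ^ 2 ≤ R ^ 2 * l ^ 4 := by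
  obtain ⟨hbR, hRb⟩ := radius_bounds_of_parabolic hb hR hl hq hqP
  have hAl := horizontal_bound_of_parabolic ha hpP hRb
  have hBl := horizontal_bound_of_parabolic hb hqP hRb
  have hab : 10 * a ≤ 13 * b := by nlinarith
  have hAB : 0 ≤ A * B := mul_nonneg hA hB
  have hl2 : 0 < l ^ 2 := by positivity
  have hδ2 : δ ^ 2 ≤ 1 / 10000 := by nlinarith
  have hABl : A * B ≤ R ^ 2 * l ^ 2 := by
    have hRl : 0 ≤ R * l ^ 2 := by positivity
    have h1 := mul_le_of_sq_mul_sq_le hA hl.le hRl (by nlinarith)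
    have h2 := mul_le_of_sq_mul_sq_le hB hl.le hRl (by nlinarith)
    have h3 : A * B * l ^ 2 ≤ R ^ 2 * l ^ 2 * l ^ 2 := by
      nlinarith [mul_le_mul h1 h2 (by positivity) hRl]
    exact le_of_mul_le_mul_right h3 hl2
  have hWab : W ≤ a + b := by
    refine (abs_le_of_sq_le_sq' ?_ (by positivity)).2
    nlinarith [mul_le_mul_of_nonneg_left hδ2 (mul_nonneg ha hb), mul_nonneg ha hb]
  have hcross : 2 * (a + b) * C ≤ 46 / 1000 * (A * B * l ^ 2) :=
    calc 2 * (a + b) * C ≤ 2 * (23 / 10 * (R * l ^ 2)) * (A * B * δ) :=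
          mul_le_mul (by linarith) hC hC0 (by positivity)
      _ = 46 / 10 * (A * B * l ^ 2) * (R * δ) := by ring
      _ ≤ 46 / 10 * (A * B * l ^ 2) * (1 / 100) := by gcongr
      _ = 46 / 1000 * (A * B * l ^ 2) := by ring
  have hCsq : C ^ 2 ≤ A * B * l ^ 2 / 10000 :=
    calc C ^ 2 ≤ (A * B * δ) ^ 2 := pow_le_pow_left₀ hC0 hC 2
      _ = A * B * (A * B) * δ ^ 2 := by ring
      _ ≤ A * B * (R ^ 2 * l ^ 2) * δ ^ 2 := by gcongr
      _ = A * B * l ^ 2 * (R * δ) ^ 2 := by ring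
      _ ≤ A * B * l ^ 2 * (1 / 100) ^ 2 := by gcongr
      _ = A * B * l ^ 2 / 10000 := by ring
  linarith [mul_le_mul_of_nonneg_right hI hl2.le, mul_le_mul_of_nonneg_left hWab hC0,
    mul_le_mul_of_nonneg_left hab ha, mul_le_mul_of_nonneg_left hδ2 (mul_nonneg ha hb),
    mul_le_mul_of_nonneg_left hδ2 (mul_nonneg hAB hl2.le), mul_nonneg ha hb,
    mul_nonneg hAB hl2.le]

namespace Fr2

variable {r : ℕ}

def wedge (x y : Fin r → ℝ) : UT r → ℝ := fun ij => x ij.1.1 * y ij.1.2 - y ij.1.1 * x ij.1.2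

lemma inv_mul_eq (p q : G r) :
    mul (inv p) q = (q.1 - p.1, q.2 - p.2 - (2⁻¹ : ℝ) • wedge p.1 q.1) := by
  ext <;> simp only [mul, inv, wedge, Pi.sub_apply, Pi.smul_apply, smul_eq_mul] <;> ring

lemma normSq_dil_inv (z : G r) {l : ℝ} (hl : l ≠ 0) :
    normSq (dil l⁻¹ z) = (normF z.1 ^ 2 * l ^ 2 + normF z.2 ^ 2) / l ^ 4 := by
  simp only [normSq, dil, normF_sq, mul_pow, ← Finset.mul_sum]
  field_simp

lemma dist_eq_quarticRoot {R : ℝ} (hR : R ≠ 0) (p q : G r) :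
    dist R p q = quarticRoot R (normF (mul (inv p) q).1 ^ 2) (normF (mul (inv p) q).2 ^ 2) := by
  rw [dist, ← sInf_setOf_pos_and_le quarticRoot_nonneg]
  congr 1
  ext l
  refine and_congr_right fun hl => ?_
  rw [one_div, normSq_dil_inv _ hl.ne', div_le_iff₀ (by positivity),
    quarticRoot_le_iff hR (sq_nonneg _) hl]

lemma dist_zero_left {R : ℝ} (hR : R ≠ 0) (u : G r) :
    dist R 0 u = quarticRoot R (normF u.1 ^ 2) (normF u.2 ^ 2) := by
  have hwedge : wedge (0 : Fin r → ℝ) u.1 = 0 := funext fun ij => by simp [wedge]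
  simp [dist_eq_quarticRoot hR, inv_mul_eq, hwedge]

lemma dist_comm (R : ℝ) (p q : G r) : dist R p q = dist R q p := by
  have h : ∀ l : ℝ, normSq (dil l (mul (inv p) q)) = normSq (dil l (mul (inv q) p)) := by
    intro l
    simp only [normSq, dil, mul, inv]
    congr 1 <;> exact Finset.sum_congr rfl fun _ _ => by ring
  simp only [dist, h]

lemma sum_wedge_sq_le (x y : Fin r → ℝ) :
    ∑ ij, wedge x y ij ^ 2 ≤ ∑ ij : Fin r × Fin r, (x ij.1 * y ij.2 - y ij.1 * x ij.2) ^ 2 :=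
  calc ∑ ij, wedge x y ij ^ 2
      = ∑ ij ∈ (Finset.univ : Finset (UT r)).map (Function.Embedding.subtype _),
          (x ij.1 * y ij.2 - y ij.1 * x ij.2) ^ 2 := by
        rw [Finset.sum_map]; rfl
    _ ≤ _ := Finset.sum_le_univ_sum_of_nonneg fun _ => sq_nonneg _

lemma sum_sq_mul_sub_mul (x y : Fin r → ℝ) :
    ∑ ij : Fin r × Fin r, (x ij.1 * y ij.2 - y ij.1 * x ij.2) ^ 2
      = 2 * (normF x ^ 2 * normF y ^ 2 - innerF x y ^ 2) := by
  have h : ∀ i j : Fin r, (x i * y j - y i * x j) ^ 2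
      = x i ^ 2 * y j ^ 2 + y i ^ 2 * x j ^ 2 - 2 * (x i * y i * (x j * y j)) := fun i j => by ring
  simp_rw [Fintype.sum_prod_type, h, Finset.sum_sub_distrib, Finset.sum_add_distrib,
    ← Finset.mul_sum, ← Finset.sum_mul, normF_sq, innerF]
  ring

lemma normF_wedge_sq_le (x y : Fin r → ℝ) :
    normF (wedge x y) ^ 2 ≤ 2 * (normF x ^ 2 * normF y ^ 2 - innerF x y ^ 2) := by
  rw [normF_sq, ← sum_sq_mul_sub_mul]
  exact sum_wedge_sq_le x y

lemma normF_wedge_le (x y : Fin r → ℝ) :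
    normF (wedge x y) ≤ 2 * (normF x * normF y * angleF x y) := by
  have hθ : 0 ≤ angleF x y := Real.arccos_nonneg _
  refine (pow_le_pow_iff_left₀ (normF_nonneg _)
    (mul_nonneg zero_le_two (mul_nonneg (mul_nonneg (normF_nonneg x) (normF_nonneg y)) hθ))
    two_ne_zero).1 ?_
  have hsin : normF x ^ 2 * normF y ^ 2 - innerF x y ^ 2
      = (normF x * normF y) ^ 2 * Real.sin (angleF x y) ^ 2 := by
    rw [innerF_eq_mul_cos, Real.sin_sq]; ring
  calc normF (wedge x y) ^ 2 ≤ 2 * ((normF x * normF y) ^ 2 * Real.sin (angleF x y) ^ 2) := by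
        rw [← hsin]; exact normF_wedge_sq_le x y
    _ ≤ 2 * ((normF x * normF y) ^ 2 * angleF x y ^ 2) :=
          mul_le_mul_of_nonneg_left (mul_le_mul_of_nonneg_left Real.sin_sq_le_sq (sq_nonneg _))
            zero_le_two
    _ ≤ (2 * (normF x * normF y * angleF x y)) ^ 2 := by
          nlinarith [sq_nonneg (normF x * normF y * angleF x y)]

lemma dist_le_dist_zero_right_of_parabolic {R δ : ℝ} (hR : 0 < R) (hδ : δ ≤ 1 / 100)
    (hRδ : R * δ ≤ 1 / 100) {p q : G r} (hq : q.2 ≠ 0)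
    (hpP : 1.9 * normF p.1 ^ 2 ≤ R * normF p.2) (hqP : 1.9 * normF q.1 ^ 2 ≤ R * normF q.2)
    (hv : angleF p.1 q.1 ≤ δ) (hw : angleF p.2 q.2 ≤ δ) (hpq : dist R 0 p ≤ dist R 0 q) :
    dist R p q ≤ dist R 0 q := by
  have hδ0 : 0 ≤ δ := (Real.arccos_nonneg _).trans hv
  have hδπ : δ ≤ Real.pi := by linarith [Real.pi_gt_three]
  have hl0 : 0 < dist R 0 q := by
    rw [dist_zero_left hR.ne']; exact quarticRoot_pos hR.ne' (pow_pos (normF_pos hq) 2)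
  have hq4 := quarticRoot_spec hR.ne' (sq_nonneg (normF q.2)) (V := normF q.1 ^ 2)
  rw [← dist_zero_left hR.ne'] at hq4
  have hp4 : normF p.1 ^ 2 * dist R 0 q ^ 2 + normF p.2 ^ 2 ≤ R ^ 2 * dist R 0 q ^ 4 := by
    rwa [← quarticRoot_le_iff hR.ne' (sq_nonneg _) hl0, ← dist_zero_left hR.ne']
  set l := dist R 0 q
  rw [dist_eq_quarticRoot hR.ne', quarticRoot_le_iff hR.ne' (sq_nonneg _) hl0, inv_mul_eq]
  dsimp only
  have hI := mul_one_sub_sq_div_two_le_innerF hδπ hv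
  have hW : normF (q.2 - p.2) ^ 2
      ≤ normF p.2 ^ 2 + normF q.2 ^ 2 - 2 * (normF p.2 * normF q.2 * (1 - δ ^ 2 / 2)) := by
    rw [normF_sub_sq, innerF_comm]
    linarith [mul_one_sub_sq_div_two_le_innerF hδπ hw]
  have hC : normF ((2⁻¹ : ℝ) • wedge p.1 q.1) ≤ normF p.1 * normF q.1 * δ := by
    rw [normF_smul, abs_of_pos (by norm_num : (0 : ℝ) < 2⁻¹)]
    have := normF_wedge_le p.1 q.1
    have := mul_le_mul_of_nonneg_left hv (mul_nonneg (normF_nonneg p.1) (normF_nonneg q.1))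
    linarith
  calc normF (q.1 - p.1) ^ 2 * l ^ 2 + normF (q.2 - p.2 - (2⁻¹ : ℝ) • wedge p.1 q.1) ^ 2
      ≤ (normF p.1 ^ 2 + normF q.1 ^ 2 - 2 * innerF p.1 q.1) * l ^ 2
          + (normF (q.2 - p.2) + normF ((2⁻¹ : ℝ) • wedge p.1 q.1)) ^ 2 := by
        rw [normF_sub_sq, innerF_comm]
        gcongr
        · linarith
        · exact normF_nonneg _
        · exact normF_sub_le _ _
    _ ≤ R ^ 2 * l ^ 4 :=
        parabolic_ball_estimate (normF_nonneg _) (normF_nonneg _) (normF_nonneg _)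
          (normF_nonneg _) hR hl0 hδ0 hδ hRδ hq4 hp4 hpP hqP hI hW (normF_nonneg _) hC

end Fr2

theorem statement15 (r : ℕ) (R : ℝ) (hR : 0 < R) :
    ∃ δ : ℝ, 0 < δ ∧ ∀ p q : Fr2.G r,
      p.1 ≠ 0 → q.1 ≠ 0 → p.2 ≠ 0 → q.2 ≠ 0 →
      ((1.9 : ℝ) * (normF p.1) ^ 2 < R * normF p.2) →
      ((1.9 : ℝ) * (normF q.1) ^ 2 < R * normF q.2) →
      angleF p.1 q.1 < δ → angleF p.2 q.2 < δ →
      Fr2.dist R p q ≤ Fr2.dist R 0 p ∨ Fr2.dist R p q ≤ Fr2.dist R 0 q := by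
  have hδ : 1 / (100 * (1 + R)) ≤ 1 / 100 := by gcongr; linarith
  have hRδ : R * (1 / (100 * (1 + R))) ≤ 1 / 100 := by
    rw [mul_one_div, div_le_div_iff₀ (by positivity) (by norm_num)]; linarith
  refine ⟨1 / (100 * (1 + R)), by positivity, fun p q _ _ hp hq hpP hqP hv hw => ?_⟩
  rcases le_total (Fr2.dist R 0 p) (Fr2.dist R 0 q) with hpq | hqp
  · exact Or.inr (Fr2.dist_le_dist_zero_right_of_parabolic hR hδ hRδ hq hpP.le hqP.le
      hv.le hw.le hpq)
  · rw [angleF_comm] at hv hw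
    rw [Fr2.dist_comm]
    exact Or.inl (Fr2.dist_le_dist_zero_right_of_parabolic hR hδ hRδ hp hqP.le hpP.le
      hv.le hw.le hqp)
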